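/- For the DFA A' constructed from a monotone circuit g_1,…,g_n: if i is a gate index with val(i) = 0 and π is a path in A' from state i to state ⊤, then π visits a state j such that g_j is an ∧-gate and val(j) = 0. -/
import Mathlib


/-- The type of a gate in a monotone circuit with `n + 1` gates: a `0`-gate, a
`1`-gate, an `∧`-gate with children `l, r`, or an `∨`-gate with children `l, r`. -/
inductive Gate (n : ℕ) where
  | zero : Gate n
  | one : Gate n
  | and (l r : Fin (n + 1)) : Gate n
  | or (l r : Fin (n + 1)) : Gate n

/-- A monotone circuit with gates `g_0, …, g_n`, where the children of each
`∧`- or `∨`-gate have strictly smaller indices. -/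
structure Circuit (n : ℕ) where
  gate : Fin (n + 1) → Gate n
  and_lt : ∀ i l r, gate i = Gate.and l r → l < i ∧ r < i
  or_lt : ∀ i l r, gate i = Gate.or l r → l < i ∧ r < i

set_option linter.unusedVariables false in
/-- The value of gate `i`: `0`-gates are false, `1`-gates are true, `∧`-gates and
`∨`-gates take the conjunction resp. disjunction of their children's values. -/
def Circuit.val {n : ℕ} (c : Circuit n) (i : Fin (n + 1)) : Bool :=
  match h : c.gate i with
  | Gate.zero => false
  | Gate.one => true
  | Gate.and l r =>
      have hlt := c.and_lt i l r h;
      c.val l && c.val r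
  | Gate.or l r =>
      have hlt := c.or_lt i l r h
      c.val l || c.val r
termination_by (i : ℕ)
decreasing_by
  · exact hlt.1
  · exact hlt.2
  · exact hlt.1
  · exact hlt.2

/-- The alphabet `Σ = {x, y} ∪ {aᵢ, bᵢ : 0 ≤ i ≤ n}`. -/
inductive Alpha (n : ℕ) where
  | x : Alpha n
  | y : Alpha n
  | a (i : Fin (n + 1)) : Alpha n
  | b (i : Fin (n + 1)) : Alpha n
deriving DecidableEq

/-- The states of the DFA `A'`: the initial state `s`, the accepting states
`⊥` (bot) and `⊤` (top), a state for each gate, and a non-accepting sink. -/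
inductive StA (n : ℕ) where
  | s : StA n
  | bot : StA n
  | top : StA n
  | g (i : Fin (n + 1)) : StA n
  | sink : StA n
deriving DecidableEq

/-- The DFA `A'` constructed from the monotone circuit `c`. -/
def dfaA {n : ℕ} (c : Circuit n) : DFA (Alpha n) (StA n) where
  step := fun p ch =>
    match p, ch with
    | StA.s, Alpha.x => StA.g (Fin.last n)
    | StA.top, Alpha.y => StA.s
    | StA.g i, Alpha.a j =>
        if j = i then
          match c.gate i with
          | Gate.zero => StA.bot
          | Gate.one => StA.top
          | Gate.and l _ => StA.g l
          | Gate.or l _ => StA.g l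
        else StA.sink
    | StA.g i, Alpha.b j =>
        if j = i then
          match c.gate i with
          | Gate.zero => StA.bot
          | Gate.one => StA.top
          | Gate.and _ r => StA.g r
          | Gate.or _ r => StA.g r
        else StA.sink
    | _, _ => StA.sink
  start := StA.s
  accept := {StA.bot, StA.top}

/-- The states of the DFA `B`: the initial and accepting state `q`, a state `t`,
a state for each gate (only the `∧`-gate states are used), and a sink. -/
inductive StB (n : ℕ) where
  | q : StB n
  | t : StB n
  | g (i : Fin (n + 1)) : StB n
  | sink : StB n
deriving DecidableEq

/-- The DFA `B` constructed from the monotone circuit `c`. -/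
def dfaB {n : ℕ} (c : Circuit n) : DFA (Alpha n) (StB n) where
  step := fun p ch =>
    match p, ch with
    | StB.q, Alpha.x => StB.t
    | StB.t, Alpha.y => StB.q
    | StB.t, Alpha.a i =>
        match c.gate i with
        | Gate.and _ _ => StB.g i
        | Gate.or _ _ => StB.t
        | Gate.one => StB.t
        | Gate.zero => StB.sink
    | StB.t, Alpha.b i =>
        match c.gate i with
        | Gate.or _ _ => StB.t
        | Gate.one => StB.t
        | _ => StB.sink
    | StB.g i, Alpha.b j =>
        if j = i then
          match c.gate i with
          | Gate.and _ _ => StB.t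
          | _ => StB.sink
        else StB.sink
    | _, _ => StB.sink
  start := StB.q
  accept := {StB.q}

lemma sink_eval {n : ℕ} (c : Circuit n) (w : List (Alpha n)) :
    (dfaA c).evalFrom StA.sink w = StA.sink := by
  induction w with
  | nil => rfl
  | cons ch w ih =>
    have hstep : (dfaA c).step StA.sink ch = StA.sink := by cases ch <;> rfl
    simpa [DFA.evalFrom, hstep] using ih

lemma sink_ne_top {n : ℕ} (c : Circuit n) (w : List (Alpha n)) :
    (dfaA c).evalFrom StA.sink w ≠ StA.top := by
  rw [sink_eval]; simp

lemma botA_ne_top {n : ℕ} (c : Circuit n) (w : List (Alpha n)) :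
    (dfaA c).evalFrom StA.bot w ≠ StA.top := by
  cases w with
  | nil => simp [DFA.evalFrom]
  | cons ch w =>
    have hstep : (dfaA c).step StA.bot ch = StA.sink := by cases ch <;> rfl
    simp only [DFA.evalFrom, List.foldl_cons, hstep]
    exact sink_ne_top c w

lemma val_one {n : ℕ} (c : Circuit n) (i : Fin (n + 1)) (h : c.gate i = Gate.one) :
    c.val i = true := by
  rw [Circuit.val]; split <;> simp_all

lemma val_or {n : ℕ} (c : Circuit n) {i l r : Fin (n + 1)} (h : c.gate i = Gate.or l r) :
    c.val i = (c.val l || c.val r) := by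
  rw [Circuit.val]; split <;> simp_all

/-- If gate `i` evaluates to `0` and there is a path in `A'` from state `i` to
state `⊤` (a word `w` with `δ(i, w) = ⊤`), then the path visits a state `j`
(reached by some prefix of `w`) such that `g_j` is an `∧`-gate evaluating to `0`. -/
theorem stmt15 {n : ℕ} (c : Circuit n) (i : Fin (n + 1)) (hval : c.val i = false)
    (w : List (Alpha n)) (hw : (dfaA c).evalFrom (StA.g i) w = StA.top) :
    ∃ j : Fin (n + 1), (∃ l r, c.gate j = Gate.and l r) ∧ c.val j = false ∧
      ∃ u : List (Alpha n), u <+: w ∧ (dfaA c).evalFrom (StA.g i) u = StA.g j := by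
  induction w generalizing i with
  | nil => simp [DFA.evalFrom] at hw
  | cons ch w ih =>
    rcases hgate : c.gate i with _ | _ | ⟨l, r⟩ | ⟨l, r⟩
    · -- zero-gate
      exfalso
      simp only [DFA.evalFrom, List.foldl_cons] at hw
      rcases ch with _ | _ | j | j
      · exact sink_ne_top c w hw
      · exact sink_ne_top c w hw
      · by_cases hj : j = i
        · subst hj
          have hs : (dfaA c).step (StA.g j) (Alpha.a j) = StA.bot := by
            simp [dfaA, hgate]
          rw [hs] at hw
          exact botA_ne_top c w hw
        · have hs : (dfaA c).step (StA.g i) (Alpha.a j) = StA.sink := by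
            simp [dfaA, hj]
          rw [hs] at hw
          exact sink_ne_top c w hw
      · by_cases hj : j = i
        · subst hj
          have hs : (dfaA c).step (StA.g j) (Alpha.b j) = StA.bot := by
            simp [dfaA, hgate]
          rw [hs] at hw
          exact botA_ne_top c w hw
        · have hs : (dfaA c).step (StA.g i) (Alpha.b j) = StA.sink := by
            simp [dfaA, hj]
          rw [hs] at hw
          exact sink_ne_top c w hw
    · -- one-gate: contradiction
      rw [val_one c i hgate] at hval; exact absurd hval (by simp)
    · -- and-gate: i itself works
      exact ⟨i, ⟨l, r, hgate⟩, hval, [], List.nil_prefix, rfl⟩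
    · -- or-gate: recurse
      have hval' : c.val l = false ∧ c.val r = false := by
        have h := val_or c hgate; rw [h] at hval; simpa using hval
      simp only [DFA.evalFrom, List.foldl_cons] at hw
      rcases ch with _ | _ | j | j
      · exact absurd hw (sink_ne_top c w)
      · exact absurd hw (sink_ne_top c w)
      · by_cases hj : j = i
        · subst hj
          have hs : (dfaA c).step (StA.g j) (Alpha.a j) = StA.g l := by
            simp [dfaA, hgate]
          rw [hs] at hw
          obtain ⟨j', hand, hv, u, hu, heval⟩ := ih l hval'.1 hw
          refine ⟨j', hand, hv, Alpha.a j :: u, ?_, ?_⟩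
          · obtain ⟨t, ht⟩ := hu; exact ⟨t, by simp [ht]⟩
          · simp only [DFA.evalFrom, List.foldl_cons, hs]
            exact heval
        · have hs : (dfaA c).step (StA.g i) (Alpha.a j) = StA.sink := by
            simp [dfaA, hj]
          rw [hs] at hw
          exact absurd hw (sink_ne_top c w)
      · by_cases hj : j = i
        · subst hj
          have hs : (dfaA c).step (StA.g j) (Alpha.b j) = StA.g r := by
            simp [dfaA, hgate]
          rw [hs] at hw
          obtain ⟨j', hand, hv, u, hu, heval⟩ := ih r hval'.2 hw
          refine ⟨j', hand, hv, Alpha.b j :: u, ?_, ?_⟩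
          · obtain ⟨t, ht⟩ := hu; exact ⟨t, by simp [ht]⟩
          · simp only [DFA.evalFrom, List.foldl_cons, hs]
            exact heval
        · have hs : (dfaA c).step (StA.g i) (Alpha.b j) = StA.sink := by
            simp [dfaA, hj]
          rw [hs] at hw
          exact absurd hw (sink_ne_top c w)
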